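/- arXiv:2205.02232 — 2 statements merged into one kernel-verified Lean document; each statement's English description precedes it below -/
import Mathlib

section
/- For A ⊆ V∖S, the following are equivalent: (i) A ∩ F ≠ ∅ for every hedge F formed for Q[S] in G; (ii) there is no hedge formed for Q[S] in the induced subgraph G[V∖A]; (iii) Hhull(S, G[V∖A]) = S. -/
/-- A semi-Markovian graph on vertex type `V`: a DAG of directed edges together with a
symmetric irreflexive relation of bidirected edges. `dir x y` means there is a directed
edge from `x` to `y`, i.e. `x` is a parent of `y`. -/
structure SemiMarkovian (V : Type*) where
  dir : V → V → Prop
  bid : V → V → Prop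
  bid_symm : ∀ x y, bid x y → bid y x
  bid_irrefl : ∀ x, ¬ bid x x
  acyclic : ∀ x, ¬ Relation.TransGen dir x x

namespace SemiMarkovian

variable {V : Type*}

/-- The induced subgraph of `G` on the vertex set `W`. -/
def induce (G : SemiMarkovian V) (W : Set V) : SemiMarkovian V where
  dir a b := a ∈ W ∧ b ∈ W ∧ G.dir a b
  bid a b := a ∈ W ∧ b ∈ W ∧ G.bid a b
  bid_symm := fun x y h => ⟨h.2.1, h.1, G.bid_symm x y h.2.2⟩
  bid_irrefl := fun x h => G.bid_irrefl x h.2.2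
  acyclic := fun x h =>
    G.acyclic x (Relation.TransGen.mono
      (fun a b (hab : a ∈ W ∧ b ∈ W ∧ G.dir a b) => hab.2.2) x x h)

/-- There is a directed path (possibly of length zero) from `x` to `y` all of whose
vertices lie in `F`. -/
def DirPathIn (G : SemiMarkovian V) (F : Set V) (x y : V) : Prop :=
  x ∈ F ∧ Relation.ReflTransGen (fun a b => b ∈ F ∧ G.dir a b) x y

/-- `x` and `y` are joined by a path of bidirected edges all of whose vertices lie in `F`. -/
def BidConnIn (G : SemiMarkovian V) (F : Set V) (x y : V) : Prop :=
  x ∈ F ∧ Relation.ReflTransGen (fun a b => b ∈ F ∧ G.bid a b) x y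

/-- `x` is an ancestor of the set `S` in `G[F]`. -/
def AncestorIn (G : SemiMarkovian V) (F S : Set V) (x : V) : Prop :=
  ∃ s ∈ S, G.DirPathIn F x s

/-- `G[F]` is a c-component: any two vertices of `F` are joined by a path of bidirected
edges all of whose vertices lie in `F`. -/
def CComponent (G : SemiMarkovian V) (F : Set V) : Prop :=
  ∀ x ∈ F, ∀ y ∈ F, G.BidConnIn F x y

/-- `F` is a hedge formed for `Q[S]` in `G`: `S ⊊ F`, every vertex of `F` is an ancestor of
`S` in `G[F]`, and `G[F]` is a c-component. -/
def IsHedge (G : SemiMarkovian V) (S F : Set V) : Prop :=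
  S ⊂ F ∧ (∀ x ∈ F, G.AncestorIn F S x) ∧ G.CComponent F

/-- The hedge hull of `S` in `G`: the union of `S` with all hedges formed for `Q[S]` in `G`. -/
def Hhull (G : SemiMarkovian V) (S : Set V) : Set V :=
  S ∪ ⋃₀ {F | G.IsHedge S F}

/-- Vertices outside `S` that are parents of some vertex of `S`. -/
def Pa (G : SemiMarkovian V) (S : Set V) : Set V :=
  {x | x ∉ S ∧ ∃ s ∈ S, G.dir x s}

/-- Vertices outside `S` that have a bidirected edge to some vertex of `S`. -/
def Bid (G : SemiMarkovian V) (S : Set V) : Set V :=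
  {x | x ∉ S ∧ ∃ s ∈ S, G.bid x s}

/-- `Pa↔(S) := Pa(S) ∩ Bid(S)`. -/
def PaBid (G : SemiMarkovian V) (S : Set V) : Set V := G.Pa S ∩ G.Bid S

lemma path_aux {r : V → V → Prop} {Fs W : Set V} (hFW : Fs ⊆ W) {x y : V}
    (hx : x ∈ Fs)
    (h : Relation.ReflTransGen (fun a b => b ∈ Fs ∧ r a b) x y) :
    y ∈ Fs ∧ Relation.ReflTransGen (fun a b => b ∈ Fs ∧ a ∈ W ∧ b ∈ W ∧ r a b) x y := by
  induction h with
  | refl => exact ⟨hx, Relation.ReflTransGen.refl⟩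
  | tail _ h2 ih =>
      exact ⟨h2.1, ih.2.tail ⟨h2.1, hFW ih.1, hFW h2.1, h2.2⟩⟩

lemma hedge_induce_iff (G : SemiMarkovian V) {S F W : Set V} (hSW : S ⊆ W) :
    (G.induce W).IsHedge S F ↔ G.IsHedge S F ∧ F ⊆ W := by
  constructor
  · rintro ⟨hsub, hanc, hcc⟩
    have hFW : F ⊆ W := by
      intro x hx
      obtain ⟨s, hs, hxF, hp⟩ := hanc x hx
      rcases hp.cases_head with rfl | ⟨b, hstep, _⟩
      · exact hSW hs
      · exact hstep.2.1
    refine ⟨⟨hsub, ?_, ?_⟩, hFW⟩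
    · intro x hx
      obtain ⟨s, hs, hxF, hp⟩ := hanc x hx
      exact ⟨s, hs, hxF, Relation.ReflTransGen.mono (fun a b (hb : b ∈ F ∧ a ∈ W ∧ b ∈ W ∧ G.dir a b) => ⟨hb.1, hb.2.2.2⟩) x s hp⟩
    · intro x hx y hy
      obtain ⟨hxF, hp⟩ := hcc x hx y hy
      exact ⟨hxF, Relation.ReflTransGen.mono (fun a b (hb : b ∈ F ∧ a ∈ W ∧ b ∈ W ∧ G.bid a b) => ⟨hb.1, hb.2.2.2⟩) x y hp⟩
  · rintro ⟨⟨hsub, hanc, hcc⟩, hFW⟩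
    refine ⟨hsub, ?_, ?_⟩
    · intro x hx
      obtain ⟨s, hs, hxF, hp⟩ := hanc x hx
      exact ⟨s, hs, hxF, (path_aux hFW hxF hp).2⟩
    · intro x hx y hy
      obtain ⟨hxF, hp⟩ := hcc x hx y hy
      exact ⟨hxF, (path_aux hFW hxF hp).2⟩

end SemiMarkovian
/-- For `A ⊆ V∖S`, the following are equivalent: (i) `A` intersects every
hedge formed for `Q[S]` in `G`; (ii) there is no hedge formed for `Q[S]` in `G[V∖A]`;
(iii) `Hhull(S, G[V∖A]) = S`. -/
theorem hitting_iff_no_hedge_iff_hhull {V : Type*} [Fintype V] (G : SemiMarkovian V)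
    (S A : Set V) (hS : G.CComponent S) (hA : A ⊆ Sᶜ) :
    ((∀ F, G.IsHedge S F → (A ∩ F).Nonempty) ↔ ¬ ∃ F, (G.induce Aᶜ).IsHedge S F) ∧
    ((¬ ∃ F, (G.induce Aᶜ).IsHedge S F) ↔ (G.induce Aᶜ).Hhull S = S) := by
  have hSA : S ⊆ Aᶜ := fun x hx hxA => hA hxA hx
  constructor
  · constructor
    · rintro hi ⟨F, hF⟩
      rw [SemiMarkovian.hedge_induce_iff G hSA] at hF
      obtain ⟨a, haA, haF⟩ := hi F hF.1
      exact hF.2 haF haA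
    · intro hn F hF
      by_contra h
      exact hn ⟨F, (SemiMarkovian.hedge_induce_iff G hSA).mpr
        ⟨hF, fun x hxF hxA => h ⟨x, hxA, hxF⟩⟩⟩
  · constructor
    · intro hn
      apply subset_antisymm
      · rintro x (hx | ⟨F, hF, hxF⟩)
        · exact hx
        · exact absurd ⟨F, hF⟩ hn
      · exact Set.subset_union_left
    · rintro hh ⟨F, hF⟩
      have hFS : F ⊆ S := by
        intro x hx
        rw [← hh]
        exact Or.inr ⟨F, hF, hx⟩
      exact hF.1.2 hFS
end

section
/- Every hedge F formed for Q[S] in G either intersects Pa↔(S), or is contained in H := Hhull(S, G[V∖Pa↔(S)]) and is a hedge formed for Q[S] in G[H]. -/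
lemma aux_path {V : Type*} (r : V → V → Prop) (F W : Set V) (hFW : F ⊆ W) {x y : V}
    (hx : x ∈ F) (h : Relation.ReflTransGen (fun a b => b ∈ F ∧ r a b) x y) :
    Relation.ReflTransGen (fun a b => b ∈ F ∧ (a ∈ W ∧ b ∈ W ∧ r a b)) x y ∧ y ∈ F := by
  induction h with
  | refl => exact ⟨.refl, hx⟩
  | tail h step ih => exact ⟨ih.1.tail ⟨step.1, hFW ih.2, hFW step.1, step.2⟩, step.1⟩

lemma hedge_induce {V : Type*} (G : SemiMarkovian V) (S F W : Set V) (hFW : F ⊆ W)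
    (hF : G.IsHedge S F) : (G.induce W).IsHedge S F := by
  obtain ⟨h1, h2, h3⟩ := hF
  refine ⟨h1, ?_, ?_⟩
  · intro x hx
    obtain ⟨s, hs, hxF, hp⟩ := h2 x hx
    exact ⟨s, hs, hxF, (aux_path G.dir F W hFW hxF hp).1⟩
  · intro x hx y hy
    obtain ⟨hxF, hp⟩ := h3 x hx y hy
    exact ⟨hxF, (aux_path G.bid F W hFW hxF hp).1⟩

/-- Every hedge `F` formed for `Q[S]` in `G` either intersects `Pa↔(S)`, or is
contained in `H := Hhull(S, G[V∖Pa↔(S)])` and is a hedge formed for `Q[S]` in `G[H]`. -/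
theorem hedge_paBid_or_in_hull {V : Type*} [Fintype V] (G : SemiMarkovian V) (S F H : Set V)
    (hS : G.CComponent S) (hH : H = (G.induce (G.PaBid S)ᶜ).Hhull S)
    (hF : G.IsHedge S F) :
    (F ∩ G.PaBid S).Nonempty ∨ (F ⊆ H ∧ (G.induce H).IsHedge S F) := by
  by_cases hne : (F ∩ G.PaBid S).Nonempty
  · exact Or.inl hne
  · right
    have hFc : F ⊆ (G.PaBid S)ᶜ := fun x hx hx' => hne ⟨x, hx, hx'⟩
    have hhedge := hedge_induce G S F (G.PaBid S)ᶜ hFc hF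
    have hFH : F ⊆ H := by
      rw [hH]
      exact fun x hx => Or.inr ⟨F, hhedge, hx⟩
    exact ⟨hFH, hedge_induce G S F H hFH hF⟩
end
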